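/- For the weighted affine estimator with λ̂_i = λ_i, if (Σ_{i=1}^n ω_i)² ≥ (1/(2ε²)) log(2/α) Σ_{i=1}^n (ω_i/λ_i)², then P(|p̂_n - p| > ε) ≤ α. -/

import Mathlib

open MeasureTheory ProbabilityTheory Finset Filter

/-- Sample mean of the first `n` ratings (ratings are indexed from 1). -/
noncomputable def pbar {Ω : Type*} (r : ℕ → Ω → ℝ) (n : ℕ) (ω : Ω) : ℝ :=
  (∑ i ∈ Finset.Icc 1 n, r i ω) / n

/-- σ-algebra generated by the first `n` ratings. -/
def ratingsAlg {Ω : Type*} (r : ℕ → Ω → ℝ) (n : ℕ) : MeasurableSpace Ω :=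
  ⨆ i ∈ Finset.Icc 1 n, MeasurableSpace.comap (r i) (inferInstance : MeasurableSpace ℝ)

/-- The bandwagon rating process of Xie et al., as used in the paper. -/
structure Bandwagon {Ω : Type*} [MeasurableSpace Ω] (μ : Measure Ω)
    (p : ℝ) (lam : ℕ → ℝ) (r : ℕ → Ω → ℝ) : Prop where
  prob : IsProbabilityMeasure μ
  hp : 0 < p ∧ p < 1
  hlam1 : lam 1 = 1
  hlam_nonneg : ∀ n, 1 ≤ n → 0 ≤ lam n
  hlam_mono : ∀ n, 2 ≤ n → lam n ≤ lam (n - 1)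
  hmeas : ∀ n, Measurable (r n)
  hbin : ∀ n, 1 ≤ n → ∀ ω, r n ω = 0 ∨ r n ω = 1
  hfirst : ∫ ω, r 1 ω ∂μ = p
  hcond : ∀ n, 2 ≤ n →
    μ[r n | ratingsAlg r (n - 1)] =ᵐ[μ]
      fun ω => lam n * p + (1 - lam n) * pbar r (n - 1) ω

/-- Affine-corrected rating `r̂ᵢ`. -/
noncomputable def rhat {Ω : Type*} (r : ℕ → Ω → ℝ) (lam : ℕ → ℝ) (i : ℕ) (ω : Ω) : ℝ :=
  (r i ω - (1 - lam i) * pbar r (i - 1) ω) / lam i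

/-! Under the bandwagon model each rating `r i` is a `{0,1}`-valued variable whose conditional
mean given the earlier ratings is `q i = λ_i p + (1 - λ_i) p̄_{i-1}`, and
`∑ w_i (r̂_i - p) = ∑ (w_i / λ_i) (r_i - q_i)`. Hoeffding's lemma for a two-point law, applied
conditionally on the past, peels the increments off the moment generating function one at a
time, so this martingale is sub-Gaussian with variance proxy `V / 4`, `V = ∑ (w_i / λ_i)²`
(Azuma–Hoeffding). The Chernoff bound on both tails gives
`P(|p̂_n - p| > ε) ≤ 2 exp (-2 ε² (∑ w_i)² / V)`, which the sample-size condition makes `≤ α`. -/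

open Real
open scoped NNReal

namespace ProbabilityTheory

lemma integral_bernoulli {q : ℝ} (hq : q ∈ Set.Icc 0 1) (f : ℝ → ℝ) :
    ∫ x, f x ∂(ENNReal.ofReal (1 - q) • Measure.dirac 0 + ENNReal.ofReal q • Measure.dirac 1)
      = (1 - q) * f 0 + q * f 1 := by
  rw [integral_add_measure, integral_smul_measure, integral_smul_measure]
  · simp [hq.1, sub_nonneg.2 hq.2]
  all_goals exact (integrable_dirac enorm_lt_top).smul_measure ENNReal.ofReal_ne_top

lemma bernoulli_mgf_le {q : ℝ} (hq : q ∈ Set.Icc 0 1) (s : ℝ) :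
    (1 - q) * exp (-(s * q)) + q * exp (s * (1 - q)) ≤ exp (s ^ 2 / 8) := by
  set ν : Measure ℝ :=
    ENNReal.ofReal (1 - q) • Measure.dirac 0 + ENNReal.ofReal q • Measure.dirac 1
  have : IsProbabilityMeasure ν :=
    ⟨by simp [ν, ← ENNReal.ofReal_add (sub_nonneg.2 hq.2) hq.1]⟩
  have hsupp : ∀ᵐ x ∂ν, id x ∈ Set.Icc (0 : ℝ) 1 := by
    rw [ae_add_measure_iff]
    exact ⟨Measure.ae_smul_measure (by simp) _, Measure.ae_smul_measure (by simp) _⟩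
  have := (hasSubgaussianMGF_of_mem_Icc aemeasurable_id hsupp).mgf_le s
  simp only [mgf, ν, integral_bernoulli hq] at this
  convert this using 2 <;> norm_num; ring_nf

lemma norm_exp_mul_le_exp_abs {s y : ℝ} (hy : |y| ≤ 1) : ‖exp (s * y)‖ ≤ exp |s| := by
  rw [norm_of_nonneg (exp_pos _).le, exp_le_exp, ← mul_one |s|]
  exact (le_abs_self _).trans (abs_mul s y ▸ mul_le_mul_of_nonneg_left hy (abs_nonneg s))

lemma exp_mul_sub_eq_of_eq_zero_or_eq_one {r : ℝ} (hr : r = 0 ∨ r = 1) (s q : ℝ) :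
    exp (s * (r - q)) = exp (-(s * q)) + (exp (s * (1 - q)) - exp (-(s * q))) * r := by
  rcases hr with rfl | rfl <;> ring_nf

variable {Ω : Type*} {m mΩ : MeasurableSpace Ω} {μ : Measure Ω}

lemma HasSubgaussianMGF.measureReal_abs_ge_le {X : Ω → ℝ} {c : ℝ≥0}
    (h : HasSubgaussianMGF X c μ) {ε : ℝ} (hε : 0 ≤ ε) :
    μ.real {ω | ε ≤ |X ω|} ≤ 2 * exp (-ε ^ 2 / (2 * c)) := by
  have hsplit : {ω | ε ≤ |X ω|} = {ω | ε ≤ X ω} ∪ {ω | ε ≤ (-X) ω} := by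
    ext ω; exact le_abs (a := ε) (b := X ω)
  rw [hsplit]
  linarith [measureReal_union_le (μ := μ) {ω | ε ≤ X ω} {ω | ε ≤ (-X) ω},
    h.measure_ge_le hε, h.neg.measure_ge_le hε]

variable [IsFiniteMeasure μ]

lemma integral_mul_eq_of_condExp_ae_eq (hm : m ≤ mΩ) {H R q : Ω → ℝ}
    (hH : StronglyMeasurable[m] H) (hHR : Integrable (fun ω => H ω * R ω) μ)
    (hR : Integrable R μ) (hcond : μ[R|m] =ᵐ[μ] q) :
    ∫ ω, H ω * R ω ∂μ = ∫ ω, H ω * q ω ∂μ :=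
  calc ∫ ω, H ω * R ω ∂μ = ∫ ω, (μ[fun ω => H ω * R ω|m]) ω ∂μ :=
        (integral_condExp hm).symm
    _ = ∫ ω, H ω * q ω ∂μ := integral_congr_ae <| by
        filter_upwards [condExp_mul_of_stronglyMeasurable_left hH hHR hR, hcond] with ω h1 h2
        exact h1.trans (congrArg (H ω * ·) h2)

/- Conditional Hoeffding lemma for a `{0,1}`-valued `R` with `μ[R|m] = q`. Mathlib's conditional
version (`HasCondSubgaussianMGF`) needs a standard Borel `Ω`; here the pull-out property of the
conditional expectation suffices, because `exp (s * (R - q))` is affine in `R`. -/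
lemma integral_mul_exp_mul_sub_le_of_condExp_eq (hm : m ≤ mΩ) {E R q : Ω → ℝ}
    (hE : Integrable E μ) (hE₀ : ∀ ω, 0 ≤ E ω) (hEm : Measurable[m] E)
    (hR : ∀ ω, R ω = 0 ∨ R ω = 1) (hRm : Measurable R)
    (hqm : Measurable[m] q) (hq : ∀ ω, q ω ∈ Set.Icc 0 1) (hcond : μ[R|m] =ᵐ[μ] q) (s : ℝ) :
    ∫ ω, E ω * exp (s * (R ω - q ω)) ∂μ ≤ (∫ ω, E ω ∂μ) * exp (s ^ 2 / 8) := by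
  have hqm' : Measurable q := hqm.mono hm le_rfl
  have hR_le : ∀ ω, ‖R ω‖ ≤ 1 := fun ω => by rcases hR ω with h | h <;> simp [h]
  have hq_le : ∀ ω, ‖q ω‖ ≤ 1 := fun ω => abs_le.2 ⟨by linarith [(hq ω).1], (hq ω).2⟩
  set B₀ : Ω → ℝ := fun ω => exp (-(s * q ω))
  set D : Ω → ℝ := fun ω => exp (s * (1 - q ω)) - exp (-(s * q ω))
  have hB₀_le : ∀ ω, ‖B₀ ω‖ ≤ exp |s| := fun ω => by
    rw [show B₀ ω = exp (s * -q ω) by simp [B₀]]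
    exact norm_exp_mul_le_exp_abs (by rw [abs_neg]; exact hq_le ω)
  have hB₁_le : ∀ ω, ‖exp (s * (1 - q ω))‖ ≤ exp |s| := fun ω =>
    norm_exp_mul_le_exp_abs (abs_le.2 ⟨by linarith [(hq ω).2], by linarith [(hq ω).1]⟩)
  have hEB₀ : Integrable (fun ω => E ω * B₀ ω) μ :=
    hE.mul_bdd (by fun_prop) (ae_of_all _ hB₀_le)
  have hED : Integrable (fun ω => E ω * D ω) μ :=
    hE.mul_bdd (by fun_prop) (ae_of_all _ fun ω =>
      (norm_sub_le _ _).trans (add_le_add (hB₁_le ω) (hB₀_le ω)))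
  have hEDR : Integrable (fun ω => E ω * D ω * R ω) μ :=
    hED.mul_bdd hRm.aestronglyMeasurable (ae_of_all _ hR_le)
  have hEDq : Integrable (fun ω => E ω * D ω * q ω) μ :=
    hED.mul_bdd hqm'.aestronglyMeasurable (ae_of_all _ hq_le)
  calc ∫ ω, E ω * exp (s * (R ω - q ω)) ∂μ = ∫ ω, E ω * B₀ ω + E ω * D ω * R ω ∂μ := by
        congr 1; ext ω; rw [exp_mul_sub_eq_of_eq_zero_or_eq_one (hR ω)]; ring
    _ = ∫ ω, E ω * B₀ ω + E ω * D ω * q ω ∂μ := by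
      rw [integral_add hEB₀ hEDR, integral_add hEB₀ hEDq,
        integral_mul_eq_of_condExp_ae_eq hm (by fun_prop) hEDR
          ((integrable_const 1).mono' hRm.aestronglyMeasurable (ae_of_all _ hR_le)) hcond]
    _ ≤ ∫ ω, E ω * exp (s ^ 2 / 8) ∂μ := by
      refine integral_mono (hEB₀.add hEDq) (hE.mul_const _) fun ω => ?_
      calc E ω * B₀ ω + E ω * D ω * q ω
          = E ω * ((1 - q ω) * exp (-(s * q ω)) + q ω * exp (s * (1 - q ω))) := by ring
        _ ≤ E ω * exp (s ^ 2 / 8) :=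
          mul_le_mul_of_nonneg_left (bernoulli_mgf_le (hq ω) s) (hE₀ ω)
    _ = (∫ ω, E ω ∂μ) * exp (s ^ 2 / 8) := integral_mul_const _ _

lemma HasSubgaussianMGF.add_mul_sub_of_condExp_eq (hm : m ≤ mΩ) {X R q : Ω → ℝ} {c : ℝ≥0}
    (hX : HasSubgaussianMGF X c μ) (hXm : Measurable[m] X)
    (hR : ∀ ω, R ω = 0 ∨ R ω = 1) (hRm : Measurable R)
    (hqm : Measurable[m] q) (hq : ∀ ω, q ω ∈ Set.Icc 0 1) (hcond : μ[R|m] =ᵐ[μ] q) (a : ℝ) :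
    HasSubgaussianMGF (fun ω => X ω + a * (R ω - q ω)) (c + ‖a‖₊ ^ 2 / 4) μ := by
  have hfactor : ∀ t ω,
      exp (t * (X ω + a * (R ω - q ω))) = exp (t * X ω) * exp (t * a * (R ω - q ω)) :=
    fun t ω => by rw [← exp_add]; ring_nf
  have hqm' : Measurable q := hqm.mono hm le_rfl
  refine ⟨fun t => ?_, fun t => ?_⟩
  · have hRq : ∀ ω, |R ω - q ω| ≤ 1 := fun ω => by
      rcases hR ω with h | h <;> rw [h, abs_le] <;> constructor <;>
        linarith [(hq ω).1, (hq ω).2]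
    simp only [hfactor]
    exact (hX.integrable_exp_mul t).mul_bdd (by fun_prop)
      (ae_of_all _ fun ω => norm_exp_mul_le_exp_abs (hRq ω))
  calc mgf (fun ω => X ω + a * (R ω - q ω)) μ t
      = ∫ ω, exp (t * X ω) * exp (t * a * (R ω - q ω)) ∂μ := by simp only [mgf, hfactor]
    _ ≤ mgf X μ t * exp ((t * a) ^ 2 / 8) :=
      integral_mul_exp_mul_sub_le_of_condExp_eq hm (hX.integrable_exp_mul t)
        (fun _ => (exp_pos _).le) (by fun_prop) hR hRm hqm hq hcond _
    _ ≤ exp (c * t ^ 2 / 2) * exp ((t * a) ^ 2 / 8) := by gcongr; exact hX.mgf_le t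
    _ = exp ((c + ‖a‖₊ ^ 2 / 4 : ℝ≥0) * t ^ 2 / 2) := by
      rw [← exp_add]; push_cast; rw [norm_eq_abs, sq_abs]; ring_nf

lemma HasSubgaussianMGF.sum_mul_sub_of_condExp_eq [IsProbabilityMeasure μ]
    (ℱ : Filtration ℕ mΩ) {R q : ℕ → Ω → ℝ} (a : ℕ → ℝ)
    (hR : ∀ i, 1 ≤ i → ∀ ω, R i ω = 0 ∨ R i ω = 1) (hRm : ∀ i, 1 ≤ i → Measurable[ℱ i] (R i))
    (hqm : ∀ i, 1 ≤ i → Measurable[ℱ (i - 1)] (q i))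
    (hq : ∀ i, 1 ≤ i → ∀ ω, q i ω ∈ Set.Icc 0 1)
    (hcond : ∀ i, 1 ≤ i → μ[R i|ℱ (i - 1)] =ᵐ[μ] q i) (n : ℕ) :
    HasSubgaussianMGF (fun ω => ∑ i ∈ Finset.Icc 1 n, a i * (R i ω - q i ω))
      (∑ i ∈ Finset.Icc 1 n, ‖a i‖₊ ^ 2 / 4) μ := by
  induction n with
  | zero => simp
  | succ n ih =>
    have hmeas : Measurable[ℱ n] fun ω => ∑ i ∈ Finset.Icc 1 n, a i * (R i ω - q i ω) :=
      Finset.measurable_sum _ fun i hi => by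
        obtain ⟨hi1, hin⟩ := Finset.mem_Icc.1 hi
        exact ((hRm i hi1).mono (ℱ.mono hin) le_rfl).sub
          ((hqm i hi1).mono (ℱ.mono (by omega)) le_rfl) |>.const_mul _
    have hqm' := hqm (n + 1) (by omega)
    have hcond' := hcond (n + 1) (by omega)
    rw [Nat.add_sub_cancel] at hqm' hcond'
    simp only [Finset.sum_Icc_succ_top (by omega : 1 ≤ n + 1)]
    exact ih.add_mul_sub_of_condExp_eq (ℱ.le n) hmeas (hR _ (by omega))
      ((hRm _ (by omega)).mono (ℱ.le _) le_rfl) hqm' (hq _ (by omega)) hcond' _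

end ProbabilityTheory

section Ratings

variable {Ω : Type*} {r : ℕ → Ω → ℝ}

lemma ratingsAlg_mono : Monotone (ratingsAlg r) := fun _ _ hjk =>
  biSup_mono fun _ hi =>
    Finset.mem_Icc.2 ⟨(Finset.mem_Icc.1 hi).1, (Finset.mem_Icc.1 hi).2.trans hjk⟩

lemma ratingsAlg_le [MeasurableSpace Ω] (hmeas : ∀ i, Measurable (r i)) (n : ℕ) :
    ratingsAlg r n ≤ ‹MeasurableSpace Ω› :=
  iSup₂_le fun i _ => (hmeas i).comap_le

lemma ratingsAlg_zero : ratingsAlg r 0 = ⊥ := by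
  simp [ratingsAlg]

def ratingsFiltration [MeasurableSpace Ω] (hmeas : ∀ i, Measurable (r i)) :
    Filtration ℕ ‹MeasurableSpace Ω› :=
  ⟨ratingsAlg r, ratingsAlg_mono, ratingsAlg_le hmeas⟩

lemma measurable_rating {i n : ℕ} (hi : i ∈ Finset.Icc 1 n) :
    Measurable[ratingsAlg r n] (r i) :=
  Measurable.of_comap_le (le_biSup (fun j => MeasurableSpace.comap (r j) _) hi)

lemma measurable_pbar (n : ℕ) : Measurable[ratingsAlg r n] (pbar r n) :=
  (Finset.measurable_sum _ fun _ hi => measurable_rating hi).div_const _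

lemma pbar_mem_Icc (hbin : ∀ i, 1 ≤ i → ∀ ω, r i ω = 0 ∨ r i ω = 1) (n : ℕ) (ω : Ω) :
    pbar r n ω ∈ Set.Icc 0 1 := by
  have hr : ∀ i ∈ Finset.Icc 1 n, r i ω ∈ Set.Icc (0 : ℝ) 1 := fun i hi => by
    rcases hbin i (Finset.mem_Icc.1 hi).1 ω with h | h <;> simp [h]
  refine ⟨div_nonneg (Finset.sum_nonneg fun i hi => (hr i hi).1) n.cast_nonneg,
    div_le_one_of_le₀ ?_ n.cast_nonneg⟩
  simpa using Finset.sum_le_sum fun i hi => (hr i hi).2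

end Ratings

noncomputable def bandwagonProb {Ω : Type*} (p : ℝ) (lam : ℕ → ℝ) (r : ℕ → Ω → ℝ) (i : ℕ)
    (ω : Ω) : ℝ :=
  lam i * p + (1 - lam i) * pbar r (i - 1) ω

lemma sum_mul_rhat_div_sub_eq {Ω : Type*} (p : ℝ) {lam w : ℕ → ℝ} (r : ℕ → Ω → ℝ)
    (s : Finset ℕ) (hlam : ∀ i ∈ s, lam i ≠ 0) (hw : ∑ i ∈ s, w i ≠ 0) (ω : Ω) :
    (∑ i ∈ s, w i * rhat r lam i ω) / (∑ i ∈ s, w i) - p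
      = (∑ i ∈ s, w i / lam i * (r i ω - bandwagonProb p lam r i ω)) / ∑ i ∈ s, w i := by
  have hsum : ∑ i ∈ s, w i / lam i * (r i ω - bandwagonProb p lam r i ω)
      = ∑ i ∈ s, w i * rhat r lam i ω - p * ∑ i ∈ s, w i := by
    rw [Finset.mul_sum, ← Finset.sum_sub_distrib]
    refine Finset.sum_congr rfl fun i hi => ?_
    rw [rhat, bandwagonProb]
    field_simp [hlam i hi]
    ring
  rw [hsum, sub_div, mul_div_cancel_right₀ _ hw]

lemma two_mul_exp_neg_le_of_sq_ge {α ε S V : ℝ} (hα : 0 < α) (hε : 0 < ε) (hV : 0 < V)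
    (h : S ^ 2 ≥ 1 / (2 * ε ^ 2) * log (2 / α) * V) :
    2 * exp (-(ε * S) ^ 2 / (2 * (V / 4))) ≤ α := by
  have hlog : log (2 / α) ≤ (ε * S) ^ 2 / (2 * (V / 4)) := by
    rw [ge_iff_le, one_div_mul_eq_div, div_mul_eq_mul_div, div_le_iff₀ (by positivity)] at h
    rw [le_div_iff₀ (by positivity)]
    linarith
  calc 2 * exp (-(ε * S) ^ 2 / (2 * (V / 4))) ≤ 2 * exp (-log (2 / α)) := by
        gcongr; rw [neg_div]; exact neg_le_neg hlog
    _ = α := by rw [exp_neg, exp_log (by positivity)]; field_simp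

namespace Bandwagon

variable {Ω : Type*} [MeasurableSpace Ω] {μ : Measure Ω} {p : ℝ} {lam : ℕ → ℝ}
  {r : ℕ → Ω → ℝ}

lemma lam_le_one (hbw : Bandwagon μ p lam r) {i : ℕ} (hi : 1 ≤ i) : lam i ≤ 1 := by
  induction i, hi using Nat.le_induction with
  | base => exact hbw.hlam1.le
  | succ i hi ih => exact (hbw.hlam_mono (i + 1) (by omega)).trans ih

lemma bandwagonProb_mem_Icc (hbw : Bandwagon μ p lam r) {i : ℕ} (hi : 1 ≤ i) (ω : Ω) :
    bandwagonProb p lam r i ω ∈ Set.Icc 0 1 := by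
  have hl0 := hbw.hlam_nonneg i hi
  have hl1 := hbw.lam_le_one hi
  obtain ⟨hq0, hq1⟩ := pbar_mem_Icc hbw.hbin (i - 1) ω
  obtain ⟨hp0, hp1⟩ := hbw.hp
  constructor <;> unfold bandwagonProb <;> nlinarith

lemma condExp_ratingsAlg (hbw : Bandwagon μ p lam r) {i : ℕ} (hi : 1 ≤ i) :
    μ[r i|ratingsAlg r (i - 1)] =ᵐ[μ] bandwagonProb p lam r i := by
  obtain rfl | hi2 := hi.eq_or_lt
  · have := hbw.prob
    rw [Nat.sub_self, ratingsAlg_zero, condExp_bot, hbw.hfirst]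
    exact .of_forall fun ω => by simp [bandwagonProb, hbw.hlam1]
  · exact hbw.hcond i hi2

lemma hasSubgaussianMGF_sum (hbw : Bandwagon μ p lam r) (a : ℕ → ℝ) (n : ℕ) :
    HasSubgaussianMGF (fun ω => ∑ i ∈ Finset.Icc 1 n, a i * (r i ω - bandwagonProb p lam r i ω))
      (∑ i ∈ Finset.Icc 1 n, ‖a i‖₊ ^ 2 / 4) μ :=
  have := hbw.prob
  HasSubgaussianMGF.sum_mul_sub_of_condExp_eq (ratingsFiltration hbw.hmeas) a
    hbw.hbin (fun _ hi => measurable_rating (Finset.mem_Icc.2 ⟨hi, le_rfl⟩))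
    (fun _ _ => measurable_const.add ((measurable_pbar _).const_mul _))
    (fun _ => hbw.bandwagonProb_mem_Icc) (fun _ => hbw.condExp_ratingsAlg) n

end Bandwagon

theorem affine_estimator_tail_bound {Ω : Type*} [MeasurableSpace Ω] (μ : MeasureTheory.Measure Ω)
    (p : ℝ) (lam : ℕ → ℝ) (r : ℕ → Ω → ℝ)
    (hbw : Bandwagon μ p lam r)
    (hpos : ∀ i, 1 ≤ i → 0 < lam i) (w : ℕ → ℝ) (hw : ∀ i, 1 ≤ i → 0 < w i)
    (ε α : ℝ) (hε : 0 < ε) (hα : 0 < α ∧ α < 1) :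
    ∀ n, 1 ≤ n →
      (∑ i ∈ Finset.Icc 1 n, w i) ^ 2
          ≥ (1 / (2 * ε ^ 2)) * Real.log (2 / α) * ∑ i ∈ Finset.Icc 1 n, (w i / lam i) ^ 2 →
      μ {ω | ε <
          |(∑ i ∈ Finset.Icc 1 n, w i * rhat r lam i ω) / (∑ i ∈ Finset.Icc 1 n, w i) - p|}
        ≤ ENNReal.ofReal α := by
  intro n hn hsize
  have := hbw.prob
  have hIcc : ∀ i ∈ Finset.Icc 1 n, 1 ≤ i := fun i hi => (Finset.mem_Icc.1 hi).1
  set S := ∑ i ∈ Finset.Icc 1 n, w i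
  set V := ∑ i ∈ Finset.Icc 1 n, (w i / lam i) ^ 2
  set X := fun ω => ∑ i ∈ Finset.Icc 1 n, w i / lam i * (r i ω - bandwagonProb p lam r i ω)
  have hS : 0 < S := Finset.sum_pos (fun i hi => hw i (hIcc i hi)) (Finset.nonempty_Icc.2 hn)
  have hV : 0 < V := Finset.sum_pos (fun i hi =>
    pow_pos (div_pos (hw i (hIcc i hi)) (hpos i (hIcc i hi))) 2) (Finset.nonempty_Icc.2 hn)
  have hX := hbw.hasSubgaussianMGF_sum (fun i => w i / lam i) n
  have hc : ((∑ i ∈ Finset.Icc 1 n, ‖w i / lam i‖₊ ^ 2 / 4 : ℝ≥0) : ℝ) = V / 4 := by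
    push_cast
    simp only [norm_eq_abs, sq_abs, V, Finset.sum_div]
  have hevent : ∀ ω, ε < |(∑ i ∈ Finset.Icc 1 n, w i * rhat r lam i ω) / S - p| →
      ε * S ≤ |X ω| := fun ω hω => by
    rw [sum_mul_rhat_div_sub_eq p r _ (fun i hi => (hpos i (hIcc i hi)).ne') hS.ne', abs_div,
      abs_of_pos hS, lt_div_iff₀ hS] at hω
    exact hω.le
  rw [ENNReal.le_ofReal_iff_toReal_le (measure_ne_top _ _) hα.1.le]
  calc (μ _).toReal ≤ μ.real {ω | ε * S ≤ |X ω|} := measureReal_mono hevent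
    _ ≤ 2 * exp (-(ε * S) ^ 2 / (2 * (V / 4))) :=
      hc ▸ hX.measureReal_abs_ge_le (mul_pos hε hS).le
    _ ≤ α := two_mul_exp_neg_le_of_sq_ge hα.1 hε hV hsize
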